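/- arXiv:1702.08539 — 2 statements merged into one kernel-verified Lean document; each statement's English description precedes it below -/
import Mathlib

section
/- (Truncated moment problem on [-ε,ε], odd case.) Let k ≥ 0 be a natural number, let ε > 0, and let t = (t_0, t_1, …, t_{2k+1}) be a real sequence with t_0 = 1. Then there exists a Borel probability measure μ on ℝ with μ([-ε,ε]) = 1 such that t_j = ∫ y^j dμ(y) for every j ∈ {1, …, 2k+1} if and only if the matrix ε·M(0, 2k, t) − M(1, 2k+1, t) is positive semidefinite and the matrix M(1, 2k+1, t) + ε·M(0, 2k, t) is positive semidefinite. -/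
open MeasureTheory

/-- The Hankel matrix `M(k, k+2h, t)`: the `(h+1) × (h+1)` matrix whose `(i,j)` entry
is `t (k + i + j)`. -/
def hankel (t : ℕ → ℝ) (k h : ℕ) : Matrix (Fin (h + 1)) (Fin (h + 1)) ℝ :=
  Matrix.of fun i j => t (k + (i : ℕ) + (j : ℕ))

/-!
The two matrix conditions say that the Riesz functional `L(p) = ∑ pₙ tₙ` is nonnegative on
`(ε - x) q²` and on `(ε + x) q²` for `deg q ≤ k`: these are the quadratic forms of the two
matrices. Every polynomial of degree `≤ 2k + 1` that is nonnegative on `[-ε, ε]` is a sum of terms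
`q²`, `(ε ± x) q²` and `(ε² - x²) q²` of degree `≤ 2k + 1` (subtract the minimum on `[-ε, ε]`,
split off the root where it is attained, which is an endpoint or a double root, and induct on
the degree), and `L` is nonnegative on each such term. If `(t₀, …, t_{2k+1})` were outside the
convex hull of the moment curve over `[-ε, ε]`, which is compact by Carathéodory, a separating
hyperplane would give a polynomial nonnegative on `[-ε, ε]` with `L < 0`. A point of the hull is
a finite convex combination of points of the curve, i.e. the moment vector of a finitely atomic
probability measure.
-/

open Polynomial Set Matrix

lemma exists_fin_sum_smul_eq_of_mem_convexHull {E : Type*} [AddCommGroup E] [Module ℝ E]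
    [FiniteDimensional ℝ E] {s : Set E} {x : E} (hx : x ∈ convexHull ℝ s) :
    ∃ w ∈ stdSimplex ℝ (Fin (Module.finrank ℝ E + 1)),
      ∃ z : Fin (Module.finrank ℝ E + 1) → E, (∀ i, z i ∈ s) ∧ ∑ i, w i • z i = x := by
  obtain ⟨ι, _, z, w, hzs, hai, hw0, hw1, rfl⟩ := eq_pos_convex_span_of_mem_convexHull hx
  obtain ⟨x₀, hx₀⟩ := convexHull_nonempty_iff.1 ⟨_, hx⟩
  obtain ⟨e⟩ : Nonempty (ι ↪ Fin (Module.finrank ℝ E + 1)) :=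
    Function.Embedding.nonempty_of_card_le <| by
      simpa using hai.card_le_finrank_succ.trans (by simpa using Submodule.finrank_le _)
  have hoff (j) (hj : j ∉ range e) : ¬∃ i, e i = j := by simpa using hj
  refine ⟨Function.extend e w 0, ⟨fun j => ?_, ?_⟩, Function.extend e z fun _ => x₀,
    fun j => ?_, ?_⟩
  · by_cases hj : j ∈ range e
    · obtain ⟨i, rfl⟩ := hj
      rw [e.injective.extend_apply]
      exact (hw0 i).le
    · rw [Function.extend_apply' _ _ _ (hoff j hj)]
      rfl
  · rw [← hw1]
    exact (Fintype.sum_of_injective e e.injective w (Function.extend e w 0)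
      (fun j hj => Function.extend_apply' _ _ _ (hoff j hj))
      fun i => (e.injective.extend_apply _ _ _).symm).symm
  · by_cases hj : j ∈ range e
    · obtain ⟨i, rfl⟩ := hj
      rw [e.injective.extend_apply]
      exact hzs ⟨i, rfl⟩
    · rw [Function.extend_apply' _ _ _ (hoff j hj)]
      exact hx₀
  · refine (Fintype.sum_of_injective e e.injective _ _ (fun j hj => ?_) fun i => ?_).symm
    · rw [Function.extend_apply' _ _ _ (hoff j hj), Pi.zero_apply, zero_smul]
    · rw [e.injective.extend_apply, e.injective.extend_apply]

theorem IsCompact.convexHull {E : Type*} [NormedAddCommGroup E] [NormedSpace ℝ E]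
    [FiniteDimensional ℝ E] {s : Set E} (hs : IsCompact s) : IsCompact (convexHull ℝ s) := by
  set n := Module.finrank ℝ E + 1
  have hs_eq : _root_.convexHull ℝ s =
      (fun p : (Fin n → ℝ) × (Fin n → E) => ∑ i, p.1 i • p.2 i) ''
        (stdSimplex ℝ (Fin n) ×ˢ univ.pi fun _ => s) := by
    ext x
    constructor
    · intro hx
      obtain ⟨w, hw, z, hz, rfl⟩ := exists_fin_sum_smul_eq_of_mem_convexHull hx
      exact ⟨(w, z), ⟨hw, fun i _ => hz i⟩, rfl⟩
    · rintro ⟨⟨w, z⟩, ⟨hw, hz⟩, rfl⟩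
      exact (convex_convexHull ℝ s).sum_mem (fun i _ => hw.1 i) hw.2
        fun i _ => subset_convexHull ℝ s (hz i (mem_univ i))
  rw [hs_eq]
  exact ((isCompact_stdSimplex _ _).prod (isCompact_univ_pi fun _ => hs)).image (by fun_prop)

lemma exists_isProbabilityMeasure_of_mem_convexHull {α ι : Type*} [MeasurableSpace α]
    [MeasurableSingletonClass α] [Fintype ι] {f : α → ι → ℝ} {s : Set α} {v : ι → ℝ}
    (hv : v ∈ convexHull ℝ (f '' s)) :
    ∃ μ : Measure α, IsProbabilityMeasure μ ∧ μ s = 1 ∧ ∀ j, v j = ∫ y, f y j ∂μ := by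
  obtain ⟨κ, _, w, z, hw0, hw1, hz, rfl⟩ := mem_convexHull_iff_exists_fintype.1 hv
  choose y hys hyz using hz
  set μ : Measure α := ∑ i, ENNReal.ofReal (w i) • Measure.dirac (y i)
  have hμ (A : Set α) (hA : ∀ i, y i ∈ A) : μ A = 1 := by
    simp only [μ, Measure.coe_finsetSum, Finset.sum_apply, Measure.smul_apply,
      Measure.dirac_apply_of_mem (hA _), smul_eq_mul, mul_one]
    rw [← ENNReal.ofReal_sum_of_nonneg fun i _ => hw0 i, hw1, ENNReal.ofReal_one]
  refine ⟨μ, ⟨hμ univ fun _ => mem_univ _⟩, hμ s hys, fun j => ?_⟩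
  rw [integral_finsetSum_measure fun i _ =>
    (integrable_dirac enorm_lt_top).smul_measure ENNReal.ofReal_ne_top]
  simp [integral_smul_measure, integral_dirac, ENNReal.toReal_ofReal (hw0 _), hyz]

/-- The Riesz functional `X ^ n ↦ t n`. -/
def riesz (t : ℕ → ℝ) : ℝ[X] →ₗ[ℝ] ℝ := lsum fun n => t n • LinearMap.id

section Riesz

variable (t : ℕ → ℝ)

@[simp]
lemma riesz_monomial (n : ℕ) (a : ℝ) : riesz t (monomial n a) = t n * a := by
  simp [riesz]

@[simp]
lemma riesz_X_pow (n : ℕ) : riesz t (X ^ n) = t n := by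
  simp [← monomial_one_right_eq_X_pow]

@[simp]
lemma riesz_one : riesz t 1 = t 0 := by
  simpa using riesz_X_pow t 0

lemma riesz_C_mul_X_pow (n : ℕ) (a : ℝ) : riesz t (C a * X ^ n) = t n * a := by
  rw [C_mul_X_pow_eq_monomial, riesz_monomial]

lemma riesz_eq_sum_range {p : ℝ[X]} {n : ℕ} (hp : p.natDegree < n) :
    riesz t p = ∑ i ∈ Finset.range n, t i * p.coeff i :=
  p.sum_over_range' (fun _ => by simp) n hp

end Riesz

lemma riesz_eq_integral {μ : Measure ℝ} {t : ℕ → ℝ} {N : ℕ}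
    (hint : ∀ j ≤ N, Integrable (fun y => y ^ j) μ) (hmom : ∀ j ≤ N, t j = ∫ y, y ^ j ∂μ)
    {p : ℝ[X]} (hp : p.natDegree ≤ N) : riesz t p = ∫ y, p.eval y ∂μ := by
  have hp' : p.natDegree < N + 1 := Nat.lt_succ_of_le hp
  simp_rw [riesz_eq_sum_range t hp', eval_eq_sum_range' hp']
  rw [integral_finsetSum _ fun j hj =>
    (hint j (Nat.lt_succ_iff.1 (Finset.mem_range.1 hj))).const_mul _]
  refine Finset.sum_congr rfl fun j hj => ?_
  rw [integral_const_mul, hmom j (Nat.lt_succ_iff.1 (Finset.mem_range.1 hj)), mul_comm]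

lemma riesz_nonneg_of_moments {μ : Measure ℝ} [IsFiniteMeasure μ] {s : Set ℝ} (hs : IsCompact s)
    (hμs : ∀ᵐ y ∂μ, y ∈ s) {t : ℕ → ℝ} {N : ℕ} (hmom : ∀ j ≤ N, t j = ∫ y, y ^ j ∂μ)
    {p : ℝ[X]} (hp : p.natDegree ≤ N) (hnn : ∀ x ∈ s, 0 ≤ p.eval x) : 0 ≤ riesz t p := by
  have hint (j : ℕ) : Integrable (fun y : ℝ => y ^ j) μ := by
    have := (continuous_pow j).continuousOn.integrableOn_compact (μ := μ) hs
    rwa [IntegrableOn, Measure.restrict_eq_self_of_ae_mem hμs] at this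
  rw [riesz_eq_integral (fun j _ => hint j) hmom hp]
  exact integral_nonneg_of_ae (hμs.mono hnn)

def momentCurve (n : ℕ) (x : ℝ) : Fin n → ℝ := fun j => x ^ (j : ℕ)

lemma map_sum_C_mul_X_pow (Λ : ℝ[X] →ₗ[ℝ] ℝ) {n : ℕ} (f : (Fin n → ℝ) →ₗ[ℝ] ℝ) :
    Λ (∑ j : Fin n, C (f (Pi.single j 1)) * X ^ (j : ℕ)) = f fun j => Λ (X ^ (j : ℕ)) := by
  rw [f.pi_apply_eq_sum_univ, map_sum]
  refine Finset.sum_congr rfl fun j _ => ?_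
  rw [← smul_eq_C_mul, map_smul, smul_eq_mul, smul_eq_mul, mul_comm]
  congr 2
  ext i
  simp [Pi.single_apply, eq_comm]

lemma mem_convexHull_momentCurve_of_riesz_nonneg {s : Set ℝ} (hs : IsCompact s) {t : ℕ → ℝ}
    (ht0 : t 0 = 1) {N : ℕ}
    (h : ∀ p : ℝ[X], p.natDegree ≤ N → (∀ x ∈ s, 0 ≤ p.eval x) → 0 ≤ riesz t p) :
    (fun j : Fin (N + 1) => t j) ∈ convexHull ℝ (momentCurve (N + 1) '' s) := by
  by_contra hv
  have hcont : Continuous (momentCurve (N + 1)) := continuous_pi fun j => continuous_pow _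
  obtain ⟨f, u, hfu, huf⟩ := geometric_hahn_banach_closed_point (convex_convexHull ℝ _)
    (hs.image hcont).convexHull.isClosed hv
  set P := C u - ∑ j : Fin (N + 1), C (f (Pi.single j 1)) * X ^ (j : ℕ)
  have hP (Λ : ℝ[X] →ₗ[ℝ] ℝ) : Λ P = u * Λ 1 - f fun j => Λ (X ^ (j : ℕ)) := by
    rw [map_sub, ← smul_eq_mul, ← map_smul, smul_eq_C_mul, mul_one]
    exact congrArg _ (map_sum_C_mul_X_pow Λ f.toLinearMap)
  have hPdeg : P.natDegree ≤ N :=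
    (natDegree_sub_le _ _).trans <| max_le (by simp) <| natDegree_sum_le_of_forall_le _ _
      fun j _ => (natDegree_C_mul_X_pow_le _ _).trans (Nat.lt_succ_iff.1 j.2)
  have hPs : ∀ x ∈ s, 0 ≤ P.eval x := fun x hx => by
    have hPx := hP (leval x)
    simp only [leval_apply, eval_one, eval_pow, eval_X, mul_one] at hPx
    rw [hPx]
    exact sub_nonneg.2 (hfu _ (subset_convexHull ℝ _ ⟨x, hx, rfl⟩)).le
  have hPt := hP (riesz t)
  simp only [riesz_one, riesz_X_pow, ht0, mul_one] at hPt
  linarith [h P hPdeg hPs]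

theorem exists_measure_iff_riesz_nonneg {s : Set ℝ} (hs : IsCompact s) {t : ℕ → ℝ}
    (ht0 : t 0 = 1) (N : ℕ) :
    (∃ μ : Measure ℝ, IsProbabilityMeasure μ ∧ μ s = 1 ∧ ∀ j ≤ N, t j = ∫ y, y ^ j ∂μ) ↔
      ∀ p : ℝ[X], p.natDegree ≤ N → (∀ x ∈ s, 0 ≤ p.eval x) → 0 ≤ riesz t p := by
  constructor
  · rintro ⟨μ, hμ, hμs, hmom⟩ p hp hnn
    exact riesz_nonneg_of_moments hs
      (mem_ae_iff.2 ((prob_compl_eq_zero_iff hs.isClosed.measurableSet).2 hμs)) hmom hp hnn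
  · intro h
    obtain ⟨μ, hμ, hμs, hmom⟩ := exists_isProbabilityMeasure_of_mem_convexHull
      (mem_convexHull_momentCurve_of_riesz_nonneg hs ht0 h)
    exact ⟨μ, hμ, hμs, fun j hj => hmom ⟨j, Nat.lt_succ_of_le hj⟩⟩

lemma hankel_isHermitian (t : ℕ → ℝ) (s k : ℕ) : (hankel t s k).IsHermitian :=
  Matrix.ext fun i j => by simp [hankel, add_right_comm]

lemma dotProduct_hankel_mulVec (t : ℕ → ℝ) (s k : ℕ) (q : degreeLT ℝ (k + 1)) :
    degreeLTEquiv ℝ (k + 1) q ⬝ᵥ (hankel t s k *ᵥ degreeLTEquiv ℝ (k + 1) q) =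
      riesz t (X ^ s * (q : ℝ[X]) ^ 2) := by
  set c := degreeLTEquiv ℝ (k + 1) q
  have hq : (q : ℝ[X]) = ∑ i : Fin (k + 1), C (c i) * X ^ (i : ℕ) := by
    conv_lhs => rw [← sum_C_mul_X_pow_eq (q : ℝ[X])]
    exact (sum_fin _ (by simp) (mem_degreeLT.1 q.2)).symm
  rw [hq, sq, Finset.sum_mul_sum, Finset.mul_sum, map_sum]
  simp only [dotProduct, mulVec, Finset.mul_sum]
  refine Finset.sum_congr rfl fun i _ => ?_
  rw [map_sum]
  refine Finset.sum_congr rfl fun j _ => ?_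
  rw [show X ^ s * (C (c i) * X ^ (i : ℕ) * (C (c j) * X ^ (j : ℕ))) =
    C (c i * c j) * X ^ (s + i + j) by rw [C_mul]; ring, riesz_C_mul_X_pow, hankel, of_apply]
  ring

lemma posSemidef_smul_hankel_add_smul_hankel_iff (t : ℕ → ℝ) (k : ℕ) (a b : ℝ) :
    (a • hankel t 0 k + b • hankel t 1 k).PosSemidef ↔
      ∀ q ∈ degreeLT ℝ (k + 1), 0 ≤ riesz t ((C a + C b * X) * q ^ 2) := by
  have hH := ((hankel_isHermitian t 0 k).smul (IsSelfAdjoint.all a)).add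
    ((hankel_isHermitian t 1 k).smul (IsSelfAdjoint.all b))
  rw [posSemidef_iff_dotProduct_mulVec, and_iff_right hH,
    (degreeLTEquiv ℝ (k + 1)).toEquiv.symm.forall_congr_left, Subtype.forall]
  refine forall₂_congr fun q _ => ?_
  rw [show (C a + C b * X) * q ^ 2 = a • (X ^ 0 * q ^ 2) + b • (X ^ 1 * q ^ 2) by
    simp only [smul_eq_C_mul]; ring]
  simp only [Equiv.symm_symm, LinearEquiv.coe_toEquiv, star_trivial, add_mulVec, smul_mulVec,
    dotProduct_add, dotProduct_smul, dotProduct_hankel_mulVec, map_add, map_smul]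

lemma posSemidef_smul_hankel_sub_iff (t : ℕ → ℝ) (k : ℕ) (ε : ℝ) :
    (ε • hankel t 0 k - hankel t 1 k).PosSemidef ↔
      ∀ q : ℝ[X], q.natDegree ≤ k → 0 ≤ riesz t ((C ε - X) * q ^ 2) := by
  simpa [sub_eq_add_neg, degreeLT_succ_eq_degreeLE, mem_degreeLE, natDegree_le_iff_degree_le]
    using posSemidef_smul_hankel_add_smul_hankel_iff t k ε (-1)

lemma posSemidef_hankel_add_smul_iff (t : ℕ → ℝ) (k : ℕ) (ε : ℝ) :
    (hankel t 1 k + ε • hankel t 0 k).PosSemidef ↔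
      ∀ q : ℝ[X], q.natDegree ≤ k → 0 ≤ riesz t ((X + C ε) * q ^ 2) := by
  simpa [add_comm, degreeLT_succ_eq_degreeLE, mem_degreeLE, natDegree_le_iff_degree_le]
    using posSemidef_smul_hankel_add_smul_hankel_iff t k ε 1

lemma Icc_subset_closure_Ioo_diff_singleton {a b : ℝ} (hab : a < b) (r : ℝ) :
    Icc a b ⊆ closure (Ioo a b \ {r}) := by
  rw [← closure_Ioo hab.ne]
  exact closure_minimal (fun x hx => isOpen_Ioo.inter_closure
    ⟨hx, (dense_compl_singleton r).closure_eq ▸ mem_univ x⟩) isClosed_closure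

lemma nonneg_on_Icc_of_nonneg_on_Ioo_diff_singleton {f : ℝ → ℝ} (hf : Continuous f) {a b r : ℝ}
    (hab : a < b) (h : ∀ x ∈ Ioo a b \ {r}, 0 ≤ f x) : ∀ x ∈ Icc a b, 0 ≤ f x :=
  fun _ hx => closure_minimal h (isClosed_le continuous_const hf)
    (Icc_subset_closure_Ioo_diff_singleton hab r hx)

lemma natDegree_X_add_C_mul_le (ε : ℝ) (q : ℝ[X]) :
    ((X + C ε) * q).natDegree ≤ 1 + q.natDegree :=
  natDegree_mul_le_of_le (natDegree_X_add_C ε).le le_rfl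

lemma natDegree_C_sub_X_mul_le (ε : ℝ) (q : ℝ[X]) :
    ((C ε - X) * q).natDegree ≤ 1 + q.natDegree :=
  natDegree_mul_le_of_le ((natDegree_sub_le _ _).trans (by simp)) le_rfl

section Lukacs

variable {ε : ℝ}

lemma exists_eq_X_add_C_mul_of_isRoot_neg (hε : 0 < ε) {q : ℝ[X]} (hq0 : q ≠ 0)
    (hq : ∀ x ∈ Icc (-ε) ε, 0 ≤ q.eval x) (hroot : q.IsRoot (-ε)) :
    ∃ g, q = (X + C ε) * g ∧ g.natDegree + 1 = q.natDegree ∧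
      ∀ x ∈ Icc (-ε) ε, 0 ≤ g.eval x := by
  set g := q /ₘ (X + C ε)
  have hqg : q = (X + C ε) * g := by simpa using (mul_divByMonic_eq_iff_isRoot.2 hroot).symm
  have hg0 : g ≠ 0 := by rintro h; rw [h, mul_zero] at hqg; exact hq0 hqg
  refine ⟨g, hqg, ?_, nonneg_on_Icc_of_nonneg_on_Ioo_diff_singleton (r := -ε)
    (Polynomial.continuous g) (by linarith) fun x hx => ?_⟩
  · rw [hqg, natDegree_mul (X_add_C_ne_zero ε) hg0, natDegree_X_add_C, add_comm]
  · have := hq x (Ioo_subset_Icc_self hx.1)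
    rw [hqg, eval_mul] at this
    exact nonneg_of_mul_nonneg_right this (by rw [eval_add, eval_X, eval_C]; linarith [hx.1.1])

lemma exists_eq_C_sub_X_mul_of_isRoot (hε : 0 < ε) {q : ℝ[X]} (hq0 : q ≠ 0)
    (hq : ∀ x ∈ Icc (-ε) ε, 0 ≤ q.eval x) (hroot : q.IsRoot ε) :
    ∃ g, q = (C ε - X) * g ∧ g.natDegree + 1 = q.natDegree ∧
      ∀ x ∈ Icc (-ε) ε, 0 ≤ g.eval x := by
  set g := q /ₘ (X - C ε)
  have hqg : q = (X - C ε) * g := (mul_divByMonic_eq_iff_isRoot.2 hroot).symm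
  have hg0 : g ≠ 0 := by rintro h; rw [h, mul_zero] at hqg; exact hq0 hqg
  refine ⟨-g, by rw [hqg]; ring, ?_, nonneg_on_Icc_of_nonneg_on_Ioo_diff_singleton (r := ε)
    (Polynomial.continuous (-g)) (by linarith) fun x hx => ?_⟩
  · rw [natDegree_neg, hqg, natDegree_mul (X_sub_C_ne_zero ε) hg0, natDegree_X_sub_C, add_comm]
  · have := hq x (Ioo_subset_Icc_self hx.1)
    rw [hqg, eval_mul, eval_sub, eval_X, eval_C] at this
    rw [eval_neg]
    exact nonneg_of_mul_nonneg_right (a := ε - x) (by linarith) (by linarith [hx.1.2])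

lemma exists_eq_X_sub_C_sq_mul_of_isRoot {r : ℝ} (hr : r ∈ Ioo (-ε) ε) {q : ℝ[X]} (hq0 : q ≠ 0)
    (hq : ∀ x ∈ Icc (-ε) ε, 0 ≤ q.eval x) (hroot : q.IsRoot r) :
    ∃ g, q = (X - C r) ^ 2 * g ∧ g.natDegree + 2 = q.natDegree ∧
      ∀ x ∈ Icc (-ε) ε, 0 ≤ g.eval x := by
  have hmin : IsLocalMin (fun x => q.eval x) r :=
    IsMinOn.isLocalMin (fun x hx => by simpa [hroot.eq_zero] using hq x hx)
      (Icc_mem_nhds hr.1 hr.2)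
  have hderiv : q.derivative.IsRoot r := by simpa using hmin.deriv_eq_zero
  obtain ⟨g, hqg⟩ := (le_rootMultiplicity_iff hq0).1
    ((one_lt_rootMultiplicity_iff_isRoot hq0).2 ⟨hroot, hderiv⟩)
  have hg0 : g ≠ 0 := by rintro h; rw [h, mul_zero] at hqg; exact hq0 hqg
  refine ⟨g, hqg, ?_, nonneg_on_Icc_of_nonneg_on_Ioo_diff_singleton (r := r)
    (Polynomial.continuous g) (by linarith [hr.1, hr.2]) fun x hx => ?_⟩
  · rw [hqg, natDegree_mul (pow_ne_zero 2 (X_sub_C_ne_zero r)) hg0, natDegree_pow,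
      natDegree_X_sub_C, add_comm]
  · have := hq x (Ioo_subset_Icc_self hx.1)
    rw [hqg, eval_mul] at this
    exact nonneg_of_mul_nonneg_right this (by simpa using sq_pos_of_ne_zero (sub_ne_zero.2 hx.2))

-- The degree-`d` truncation of the preordering of `[-ε, ε]` generated by `ε + X` and `ε - X`.
inductive IsLukacsSum (ε : ℝ) : ℕ → ℝ[X] → Prop
  | sq {d : ℕ} (q : ℝ[X]) : 2 * q.natDegree ≤ d → IsLukacsSum ε d (q ^ 2)
  | X_add_C_mul_sq {d : ℕ} (q : ℝ[X]) :
      2 * q.natDegree + 1 ≤ d → IsLukacsSum ε d ((X + C ε) * q ^ 2)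
  | C_sub_X_mul_sq {d : ℕ} (q : ℝ[X]) :
      2 * q.natDegree + 1 ≤ d → IsLukacsSum ε d ((C ε - X) * q ^ 2)
  | C_sub_X_mul_X_add_C_mul_sq {d : ℕ} (q : ℝ[X]) :
      2 * q.natDegree + 2 ≤ d → IsLukacsSum ε d ((C ε - X) * (X + C ε) * q ^ 2)
  | add {d : ℕ} {p q : ℝ[X]} : IsLukacsSum ε d p → IsLukacsSum ε d q → IsLukacsSum ε d (p + q)

namespace IsLukacsSum

variable {d : ℕ} {p : ℝ[X]}

lemma zero (d : ℕ) : IsLukacsSum ε d 0 := by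
  simpa using sq (ε := ε) (d := d) 0 (by simp)

lemma mono (hp : IsLukacsSum ε d p) {d' : ℕ} (hd : d ≤ d') : IsLukacsSum ε d' p := by
  induction hp with
  | sq q h => exact sq q (h.trans hd)
  | X_add_C_mul_sq q h => exact X_add_C_mul_sq q (h.trans hd)
  | C_sub_X_mul_sq q h => exact C_sub_X_mul_sq q (h.trans hd)
  | C_sub_X_mul_X_add_C_mul_sq q h => exact C_sub_X_mul_X_add_C_mul_sq q (h.trans hd)
  | add _ _ ih₁ ih₂ => exact add ih₁ ih₂

lemma sq_mul (hp : IsLukacsSum ε d p) (s : ℝ[X]) {m : ℕ} (hs : s.natDegree ≤ m) :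
    IsLukacsSum ε (d + 2 * m) (s ^ 2 * p) := by
  have hdeg (q : ℝ[X]) := natDegree_mul_le_of_le hs (le_refl q.natDegree)
  induction hp with
  | sq q h => rw [← mul_pow]; exact sq _ (by linarith [hdeg q])
  | X_add_C_mul_sq q h =>
    rw [mul_left_comm, ← mul_pow]; exact X_add_C_mul_sq _ (by linarith [hdeg q])
  | C_sub_X_mul_sq q h =>
    rw [mul_left_comm, ← mul_pow]; exact C_sub_X_mul_sq _ (by linarith [hdeg q])
  | C_sub_X_mul_X_add_C_mul_sq q h =>
    rw [mul_left_comm, ← mul_pow]; exact C_sub_X_mul_X_add_C_mul_sq _ (by linarith [hdeg q])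
  | add _ _ ih₁ ih₂ => rw [mul_add]; exact add ih₁ ih₂

lemma X_add_C_mul (hp : IsLukacsSum ε d p) : IsLukacsSum ε (d + 1) ((X + C ε) * p) := by
  induction hp with
  | sq q h => exact X_add_C_mul_sq q (by omega)
  | X_add_C_mul_sq q h =>
    rw [← mul_assoc, ← pow_two, ← mul_pow]
    exact sq _ (by linarith [natDegree_X_add_C_mul_le ε q])
  | C_sub_X_mul_sq q h =>
    rw [← mul_assoc, mul_comm (X + C ε)]; exact C_sub_X_mul_X_add_C_mul_sq q (by omega)
  | C_sub_X_mul_X_add_C_mul_sq q h =>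
    rw [show (X + C ε) * ((C ε - X) * (X + C ε) * q ^ 2) = (C ε - X) * ((X + C ε) * q) ^ 2 by
      ring]
    exact C_sub_X_mul_sq _ (by linarith [natDegree_X_add_C_mul_le ε q])
  | add _ _ ih₁ ih₂ => rw [mul_add]; exact add ih₁ ih₂

lemma C_sub_X_mul (hp : IsLukacsSum ε d p) : IsLukacsSum ε (d + 1) ((C ε - X) * p) := by
  induction hp with
  | sq q h => exact C_sub_X_mul_sq q (by omega)
  | X_add_C_mul_sq q h =>
    rw [← mul_assoc]; exact C_sub_X_mul_X_add_C_mul_sq q (by omega)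
  | C_sub_X_mul_sq q h =>
    rw [← mul_assoc, ← pow_two, ← mul_pow]
    exact sq _ (by linarith [natDegree_C_sub_X_mul_le ε q])
  | C_sub_X_mul_X_add_C_mul_sq q h =>
    rw [show (C ε - X) * ((C ε - X) * (X + C ε) * q ^ 2) = (X + C ε) * ((C ε - X) * q) ^ 2 by
      ring]
    exact X_add_C_mul_sq _ (by linarith [natDegree_C_sub_X_mul_le ε q])
  | add _ _ ih₁ ih₂ => rw [mul_add]; exact add ih₁ ih₂

end IsLukacsSum

theorem IsLukacsSum.of_nonneg (hε : 0 < ε) {d : ℕ} {p : ℝ[X]} (hp : p.natDegree ≤ d)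
    (hnn : ∀ x ∈ Icc (-ε) ε, 0 ≤ p.eval x) : IsLukacsSum ε d p := by
  induction d using Nat.strong_induction_on generalizing p with
  | _ d ih =>
  obtain ⟨r, hr, hmin⟩ := (isCompact_Icc (a := -ε) (b := ε)).exists_isMinOn
    (nonempty_Icc.2 (by linarith)) (Polynomial.continuous p).continuousOn
  set q := p - C (p.eval r)
  have hq : ∀ x ∈ Icc (-ε) ε, 0 ≤ q.eval x := fun x hx => by simpa [q] using hmin hx
  have hroot : q.IsRoot r := by simp [q]
  have hqd : q.natDegree ≤ d := (natDegree_sub_le _ _).trans (by simpa using hp)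
  rw [show p = q + C (√(p.eval r)) ^ 2 by rw [← C_pow, Real.sq_sqrt (hnn r hr)]; ring]
  refine .add ?_ (.sq _ (by simp))
  rcases eq_or_ne q 0 with hq0 | hq0
  · rw [hq0]; exact .zero d
  rcases hr.1.eq_or_lt with rfl | hr₁
  · obtain ⟨g, hqg, hg, hgnn⟩ := exists_eq_X_add_C_mul_of_isRoot_neg hε hq0 hq hroot
    rw [hqg]
    exact ((ih (d - 1) (by omega) (by omega) hgnn).X_add_C_mul).mono (by omega)
  rcases hr.2.eq_or_lt with rfl | hr₂
  · obtain ⟨g, hqg, hg, hgnn⟩ := exists_eq_C_sub_X_mul_of_isRoot hε hq0 hq hroot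
    rw [hqg]
    exact ((ih (d - 1) (by omega) (by omega) hgnn).C_sub_X_mul).mono (by omega)
  · obtain ⟨g, hqg, hg, hgnn⟩ := exists_eq_X_sub_C_sq_mul_of_isRoot ⟨hr₁, hr₂⟩ hq0 hq hroot
    rw [hqg]
    exact ((ih (d - 2) (by omega) (by omega) hgnn).sq_mul _ (natDegree_X_sub_C r).le).mono
      (by omega)

lemma IsLukacsSum.riesz_nonneg (hε : 0 < ε) {t : ℕ → ℝ} {k : ℕ}
    (hsub : ∀ q : ℝ[X], q.natDegree ≤ k → 0 ≤ riesz t ((C ε - X) * q ^ 2))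
    (hadd : ∀ q : ℝ[X], q.natDegree ≤ k → 0 ≤ riesz t ((X + C ε) * q ^ 2))
    {d : ℕ} {p : ℝ[X]} (hp : IsLukacsSum ε d p) (hd : d ≤ 2 * k + 1) : 0 ≤ riesz t p := by
  have of_two_smul (f : ℝ[X]) (h : 0 ≤ riesz t ((2 * ε) • f)) : 0 ≤ riesz t f := by
    rw [map_smul, smul_eq_mul] at h
    exact nonneg_of_mul_nonneg_right h (by positivity)
  induction hp with
  | sq q h =>
    refine of_two_smul _ ?_
    rw [show (2 * ε) • q ^ 2 = (C ε - X) * q ^ 2 + (X + C ε) * q ^ 2 by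
      rw [smul_eq_C_mul, C_mul, C_ofNat]; ring, map_add]
    exact add_nonneg (hsub q (by omega)) (hadd q (by omega))
  | X_add_C_mul_sq q h => exact hadd q (by omega)
  | C_sub_X_mul_sq q h => exact hsub q (by omega)
  | C_sub_X_mul_X_add_C_mul_sq q h =>
    refine of_two_smul _ ?_
    rw [show (2 * ε) • ((C ε - X) * (X + C ε) * q ^ 2) =
        (C ε - X) * ((X + C ε) * q) ^ 2 + (X + C ε) * ((C ε - X) * q) ^ 2 by
      rw [smul_eq_C_mul, C_mul, C_ofNat]; ring, map_add]
    exact add_nonneg (hsub _ (by linarith [natDegree_X_add_C_mul_le ε q]))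
      (hadd _ (by linarith [natDegree_C_sub_X_mul_le ε q]))
  | add _ _ ih₁ ih₂ => rw [map_add]; exact add_nonneg ih₁ ih₂

theorem riesz_nonneg_on_Icc_iff (hε : 0 < ε) (t : ℕ → ℝ) (k : ℕ) :
    (∀ p : ℝ[X], p.natDegree ≤ 2 * k + 1 → (∀ x ∈ Icc (-ε) ε, 0 ≤ p.eval x) → 0 ≤ riesz t p) ↔
      (∀ q : ℝ[X], q.natDegree ≤ k → 0 ≤ riesz t ((C ε - X) * q ^ 2)) ∧
        ∀ q : ℝ[X], q.natDegree ≤ k → 0 ≤ riesz t ((X + C ε) * q ^ 2) := by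
  refine ⟨fun h => ⟨fun q hq => h _ ?_ fun x hx => ?_, fun q hq => h _ ?_ fun x hx => ?_⟩,
    fun ⟨hsub, hadd⟩ p hp hnn => (IsLukacsSum.of_nonneg hε hp hnn).riesz_nonneg hε hsub hadd le_rfl⟩
  · linarith [natDegree_C_sub_X_mul_le ε (q ^ 2), natDegree_pow_le (p := q) (n := 2)]
  · simpa using mul_nonneg (sub_nonneg.2 hx.2) (sq_nonneg (q.eval x))
  · linarith [natDegree_X_add_C_mul_le ε (q ^ 2), natDegree_pow_le (p := q) (n := 2)]
  · simpa using mul_nonneg (neg_le_iff_add_nonneg.1 hx.1) (sq_nonneg (q.eval x))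

end Lukacs

/-- Truncated moment problem on `[-ε, ε]`, odd case. -/
theorem truncated_moment_problem_odd (k : ℕ) (ε : ℝ) (hε : 0 < ε)
    (t : ℕ → ℝ) (ht0 : t 0 = 1) :
    (∃ μ : Measure ℝ, IsProbabilityMeasure μ ∧ μ (Set.Icc (-ε) ε) = 1 ∧
        ∀ j, 1 ≤ j → j ≤ 2 * k + 1 → t j = ∫ y, y ^ j ∂μ) ↔
      ((ε • hankel t 0 k - hankel t 1 k).PosSemidef ∧
        (hankel t 1 k + ε • hankel t 0 k).PosSemidef) := by
  rw [posSemidef_smul_hankel_sub_iff, posSemidef_hankel_add_smul_iff,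
    ← riesz_nonneg_on_Icc_iff hε, ← exists_measure_iff_riesz_nonneg isCompact_Icc ht0]
  refine exists_congr fun μ => and_congr_right fun hμ => and_congr_right fun _ =>
    ⟨fun h j hj => ?_, fun h j _ hj => h j hj⟩
  rcases j with _ | j
  · simp [ht0]
  · exact h _ j.succ_pos hj
end

section
/- (Exactness of the semidefinite moment relaxation for univariate polynomial optimization on a symmetric interval.) Let k ≥ 1 be a natural number, let ε > 0, and let p = (p_0, p_1, …, p_{2k}) ∈ ℝ^{2k+1}. Then sSup { Σ_{j=0}^{2k} p_j y^j : y ∈ [-ε, ε] } = sSup { Σ_{j=0}^{2k} p_j m_j : m ∈ ℝ^{2k+1}, m_0 = 1, the Hankel matrix M(0, 2k, m) is positive semidefinite, and ε²·M(0, 2k−2, m) − M(2, 2k, m) is positive semidefinite }. -/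
open Polynomial Finset Matrix

namespace Polynomial

section OrderedRing

variable {R : Type*} [CommRing R] [LinearOrder R] [IsStrictOrderedRing R]

theorem two_mul_natDegree_le_natDegree_sq_add_sq_of_le {u v : R[X]} (hu : u ≠ 0)
    (hvu : v.natDegree ≤ u.natDegree) : 2 * u.natDegree ≤ (u ^ 2 + v ^ 2).natDegree := by
  have hcoeff : (u ^ 2 + v ^ 2).coeff (2 * u.natDegree) =
      u.leadingCoeff ^ 2 + v.coeff u.natDegree ^ 2 := by
    rw [coeff_add, coeff_pow_of_natDegree_le le_rfl, coeff_pow_of_natDegree_le hvu, leadingCoeff]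
  have hpos : 0 < u.leadingCoeff ^ 2 := by
    have := leadingCoeff_ne_zero.mpr hu
    positivity
  refine le_natDegree_of_ne_zero ?_
  rw [hcoeff]
  exact (add_pos_of_pos_of_nonneg hpos (sq_nonneg _)).ne'

theorem two_mul_natDegree_le_natDegree_sq_add_sq (u v : R[X]) :
    2 * u.natDegree ≤ (u ^ 2 + v ^ 2).natDegree := by
  rcases eq_or_ne u 0 with rfl | hu
  · simp
  rcases le_total v.natDegree u.natDegree with hvu | huv
  · exact two_mul_natDegree_le_natDegree_sq_add_sq_of_le hu hvu
  · rcases eq_or_ne v 0 with rfl | hv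
    · simp_all
    have := two_mul_natDegree_le_natDegree_sq_add_sq_of_le hv huv
    rw [add_comm] at this
    omega

end OrderedRing

theorem eval_nonneg_of_forall_ne (P : ℝ[X]) (a : ℝ) (h : ∀ t ≠ a, 0 ≤ P.eval t)
    (t : ℝ) : 0 ≤ P.eval t := by
  have hclosed : IsClosed {t | 0 ≤ P.eval t} := isClosed_le continuous_const P.continuous
  have := closure_minimal (s := {a}ᶜ) h hclosed
  rw [(dense_compl_singleton a).closure_eq] at this
  exact this (Set.mem_univ t)

theorem exists_eq_sq_add_C_sq_mul_of_nonneg (N : ℝ[X]) (hN : ∀ t, 0 ≤ N.eval t)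
    (hdeg : 0 < N.natDegree) :
    ∃ (a b : ℝ) (N₁ : ℝ[X]), N = ((X - C a) ^ 2 + C b ^ 2) * N₁ := by
  obtain ⟨z, hz⟩ :=
    IsAlgClosed.exists_aeval_eq_zero ℂ N (natDegree_pos_iff_degree_pos.mp hdeg).ne'
  rcases eq_or_ne z.im 0 with him | him
  · have hroot : N.IsRoot z.re := by
      have : z = algebraMap ℝ ℂ z.re := Complex.ext (by simp) (by simp [him])
      rw [this, aeval_algebraMap_apply_eq_algebraMap_eval] at hz
      simpa using hz
    have hmin : IsLocalMin N.eval z.re :=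
      Filter.Eventually.of_forall fun t => by simpa [hroot.eq_zero] using hN t
    have hder : N.derivative.IsRoot z.re := by
      simpa [Polynomial.deriv] using hmin.deriv_eq_zero
    have hN0 : N ≠ 0 := by rintro rfl; simp at hdeg
    obtain ⟨N₁, hN₁⟩ := (le_rootMultiplicity_iff hN0).mp
      ((one_lt_rootMultiplicity_iff_isRoot hN0).mpr ⟨hroot, hder⟩)
    exact ⟨z.re, 0, N₁, by simpa using hN₁⟩
  · obtain ⟨N₁, hN₁⟩ := N.quadratic_dvd_of_aeval_eq_zero_im_ne_zero hz him
    refine ⟨z.re, z.im, N₁, hN₁.trans ?_⟩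
    rw [Complex.sq_norm, Complex.normSq_apply]
    simp only [C_add, C_mul, map_ofNat]
    ring

theorem exists_eq_sq_add_sq_of_nonneg (N : ℝ[X]) (hN : ∀ t, 0 ≤ N.eval t) :
    ∃ u v : ℝ[X], N = u ^ 2 + v ^ 2 := by
  induction hn : N.natDegree using Nat.strong_induction_on generalizing N with
  | _ n ih =>
  rcases Nat.eq_zero_or_pos n with rfl | hpos
  · rw [eq_C_of_natDegree_eq_zero hn] at hN ⊢
    refine ⟨C √(N.coeff 0), 0, ?_⟩
    rw [← C_pow, Real.sq_sqrt (by simpa using hN 0)]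
    ring
  obtain ⟨a, b, N₁, rfl⟩ := exists_eq_sq_add_C_sq_mul_of_nonneg N hN (hn ▸ hpos)
  have hD : ((X - C a) ^ 2 + C b ^ 2 : ℝ[X]).natDegree = 2 := by
    rw [natDegree_add_eq_left_of_natDegree_lt] <;> simp
  have hN₁ : N₁ ≠ 0 := by rintro rfl; simp only [mul_zero, natDegree_zero] at hn; omega
  have hdeg : N₁.natDegree = n - 2 := by
    rw [natDegree_mul (by rintro h; simp [h] at hD) hN₁, hD] at hn
    omega
  have hN₁_nonneg : ∀ t, 0 ≤ N₁.eval t := by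
    refine eval_nonneg_of_forall_ne N₁ a fun t ht => ?_
    have hpos : 0 < (t - a) ^ 2 + b ^ 2 := by
      have := sub_ne_zero.mpr ht
      positivity
    have := hN t
    simp only [eval_mul, eval_add, eval_pow, eval_sub, eval_X, eval_C] at this
    exact nonneg_of_mul_nonneg_right this hpos
  obtain ⟨u, v, rfl⟩ := ih _ (by omega) N₁ hN₁_nonneg hdeg
  exact ⟨(X - C a) * u - C b * v, (X - C a) * v + C b * u, by ring⟩

section EvenOdd

variable {R : Type*} [CommSemiring R]

theorem expand_contract_add_X_mul_expand_contract_divX (u : R[X]) :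
    expand R 2 (contract 2 u) + X * expand R 2 (contract 2 u.divX) = u := by
  ext n
  obtain ⟨i, rfl | rfl⟩ := Nat.even_or_odd' n
  · rcases i with _ | i
    · simp [coeff_expand, coeff_contract]
    · rw [show 2 * (i + 1) = 2 * i + 1 + 1 by ring]
      simp [coeff_expand, coeff_contract, coeff_X_mul,
        show (2 * i + 1 + 1) / 2 * 2 = 2 * i + 1 + 1 by omega]
  · simp [coeff_expand, coeff_contract, coeff_X_mul, coeff_divX, mul_comm i 2]

theorem contract_two_X_mul_expand (B : R[X]) : contract 2 (X * expand R 2 B) = 0 := by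
  have : contract 2 (X : R[X]) = 0 := by
    ext i
    rw [coeff_contract two_ne_zero, coeff_X, coeff_zero, if_neg (by omega)]
  rw [contract_mul_expand two_ne_zero, this, zero_mul]

theorem natDegree_contract_two_le {u : R[X]} {k : ℕ} (hu : u.natDegree ≤ 2 * k) :
    (contract 2 u).natDegree ≤ k := by
  refine natDegree_le_iff_coeff_eq_zero.mpr fun i hi => ?_
  rw [coeff_contract two_ne_zero]
  exact coeff_eq_zero_of_natDegree_lt (by omega)

theorem natDegree_contract_two_divX_le {u : R[X]} {k : ℕ} (hu : u.natDegree ≤ 2 * k) :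
    (contract 2 u.divX).natDegree ≤ k - 1 := by
  refine natDegree_le_iff_coeff_eq_zero.mpr fun i hi => ?_
  rw [coeff_contract two_ne_zero, coeff_divX]
  exact coeff_eq_zero_of_natDegree_lt (by omega)

end EvenOdd

theorem exists_eq_sq_add_sq_add_X_mul_of_nonneg (r : ℝ[X]) {k : ℕ}
    (hdeg : r.natDegree ≤ 2 * k) (hr : ∀ s, 0 ≤ s → 0 ≤ r.eval s) :
    ∃ e₁ e₂ o₁ o₂ : ℝ[X], e₁.natDegree ≤ k ∧ e₂.natDegree ≤ k ∧
      o₁.natDegree ≤ k - 1 ∧ o₂.natDegree ≤ k - 1 ∧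
      r = e₁ ^ 2 + e₂ ^ 2 + X * (o₁ ^ 2 + o₂ ^ 2) := by
  obtain ⟨u, v, huv⟩ := exists_eq_sq_add_sq_of_nonneg (expand ℝ 2 r) fun t => by
    simpa [expand_eval] using hr _ (sq_nonneg t)
  have hdeg' : (expand ℝ 2 r).natDegree ≤ 4 * k := by rw [natDegree_expand]; omega
  have hu : u.natDegree ≤ 2 * k := by
    have := two_mul_natDegree_le_natDegree_sq_add_sq u v
    rw [← huv] at this
    omega
  have hv : v.natDegree ≤ 2 * k := by
    have := two_mul_natDegree_le_natDegree_sq_add_sq v u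
    rw [add_comm, ← huv] at this
    omega
  set e₁ := contract 2 u
  set e₂ := contract 2 v
  set o₁ := contract 2 u.divX
  set o₂ := contract 2 v.divX
  refine ⟨e₁, e₂, o₁, o₂, natDegree_contract_two_le hu, natDegree_contract_two_le hv,
    natDegree_contract_two_divX_le hu, natDegree_contract_two_divX_le hv, ?_⟩
  -- `contract 2` keeps the even part and kills the odd term `X * expand ℝ 2 _`
  have hsplit : u ^ 2 + v ^ 2 = expand ℝ 2 (e₁ ^ 2 + e₂ ^ 2 + X * (o₁ ^ 2 + o₂ ^ 2)) +
      X * expand ℝ 2 (2 * (e₁ * o₁ + e₂ * o₂)) := by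
    conv_lhs => rw [← expand_contract_add_X_mul_expand_contract_divX u,
      ← expand_contract_add_X_mul_expand_contract_divX v]
    simp only [map_add, map_mul, map_pow, expand_X, map_ofNat]
    ring
  rw [← contract_expand 2 two_ne_zero (f := r), huv, hsplit, contract_add two_ne_zero,
    contract_expand 2 two_ne_zero, contract_two_X_mul_expand, add_zero]

section Goursat

variable {R : Type*} [CommRing R]

/-- The Goursat transform `(1 + X) ^ n * E ((1 - X) / (1 + X))`, written without division. -/
noncomputable def goursat (n : ℕ) (E : R[X]) : R[X] :=
  ∑ j ∈ range (n + 1), C (E.coeff j) * ((1 - X) ^ j * (1 + X) ^ (n - j))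

theorem natDegree_goursat_le (n : ℕ) (E : R[X]) : (goursat n E).natDegree ≤ n := by
  refine natDegree_sum_le_of_forall_le _ _ fun j hj => ?_
  compute_degree
  have := mem_range.mp hj
  omega

theorem eval_goursat {K : Type*} [Field K] {n : ℕ} {E : K[X]} (hE : E.natDegree ≤ n) {x : K}
    (hx : 1 + x ≠ 0) : (goursat n E).eval x = (1 + x) ^ n * E.eval ((1 - x) / (1 + x)) := by
  rw [goursat, eval_finsetSum, eval_eq_sum_range' (Nat.lt_succ_of_le hE), mul_sum]
  refine sum_congr rfl fun j hj => ?_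
  have hj : j ≤ n := Nat.lt_succ_iff.mp (mem_range.mp hj)
  simp only [eval_mul, eval_C, eval_pow, eval_add, eval_sub, eval_one, eval_X]
  rw [div_pow, ← pow_sub_mul_pow (1 + x) hj]
  field_simp

theorem pow_mul_eval_goursat_div {K : Type*} [Field K] [NeZero (2 : K)] {n : ℕ} {E : K[X]}
    (hE : E.natDegree ≤ n) {x : K} (hx : 1 + x ≠ 0) :
    (1 + x) ^ n * (goursat n E).eval ((1 - x) / (1 + x)) = 2 ^ n * E.eval x := by
  have hs : (1 + (1 - x) / (1 + x)) * (1 + x) = 2 := by field_simp; ring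
  have hs0 : 1 + (1 - x) / (1 + x) ≠ 0 := left_ne_zero_of_mul (hs ▸ two_ne_zero)
  have hsx : (1 - (1 - x) / (1 + x)) / (1 + (1 - x) / (1 + x)) = x := by
    rw [div_eq_iff hs0]; field_simp; ring
  rw [eval_goursat hE hs0, hsx, ← mul_assoc, ← mul_pow, mul_comm (1 + x), hs]

end Goursat

theorem exists_eq_sq_add_sq_add_one_sub_X_sq_mul_of_nonneg_on_Icc (q : ℝ[X]) {k : ℕ}
    (hk : 1 ≤ k) (hdeg : q.natDegree ≤ 2 * k)
    (hq : ∀ x ∈ Set.Icc (-1 : ℝ) 1, 0 ≤ q.eval x) :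
    ∃ f₁ f₂ g₁ g₂ : ℝ[X], f₁.natDegree ≤ k ∧ f₂.natDegree ≤ k ∧
      g₁.natDegree ≤ k - 1 ∧ g₂.natDegree ≤ k - 1 ∧
      q = f₁ ^ 2 + f₂ ^ 2 + (1 - X ^ 2) * (g₁ ^ 2 + g₂ ^ 2) := by
  obtain ⟨m, rfl⟩ : ∃ m, k = m + 1 := ⟨k - 1, by omega⟩
  rw [Nat.add_sub_cancel] at *
  have hnonneg : ∀ s : ℝ, 0 ≤ s → 0 ≤ (goursat (2 * (m + 1)) q).eval s := fun s hs => by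
    have h1 : 0 < 1 + s := by linarith
    have hmem : (1 - s) / (1 + s) ∈ Set.Icc (-1 : ℝ) 1 :=
      ⟨by rw [le_div_iff₀ h1]; linarith, by rw [div_le_one h1]; linarith⟩
    rw [eval_goursat hdeg h1.ne']
    exact mul_nonneg (by positivity) (hq _ hmem)
  obtain ⟨e₁, e₂, o₁, o₂, he₁, he₂, ho₁, ho₂, hdecomp⟩ :=
    exists_eq_sq_add_sq_add_X_mul_of_nonneg _ (natDegree_goursat_le _ _) hnonneg
  rw [Nat.add_sub_cancel] at ho₁ ho₂
  -- transforming back, `e ^ 2` becomes `(goursat (m + 1) e) ^ 2` and `X * o ^ 2` becomes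
  -- `(1 - X ^ 2) * (goursat m o) ^ 2`, up to the factor `2 ^ (2 * (m + 1))`
  set c : ℝ := (2 ^ (m + 1))⁻¹
  refine ⟨C c * goursat (m + 1) e₁, C c * goursat (m + 1) e₂, C c * goursat m o₁,
    C c * goursat m o₂, ?_, ?_, ?_, ?_, ?_⟩
  iterate 4 exact natDegree_C_mul_le _ _ |>.trans (natDegree_goursat_le _ _)
  refine eq_of_infinite_eval_eq _ _ ((Set.Ioi_infinite (-1)).mono fun x (hx : -1 < x) => ?_)
  have hx1 : 1 + x ≠ 0 := by linarith
  have hinv := pow_mul_eval_goursat_div hdeg hx1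
  have hs : (1 - x) / (1 + x) * (1 + x) ^ 2 = 1 - x ^ 2 := by field_simp; ring
  have hc : c ^ 2 * 2 ^ (2 * (m + 1)) = 1 := by
    rw [pow_mul', ← mul_pow, inv_mul_cancel₀ (by positivity), one_pow]
  simp only [hdecomp, Set.mem_ofPred_eq, eval_add, eval_mul, eval_pow, eval_C, eval_sub, eval_one,
    eval_X, eval_goursat he₁ hx1, eval_goursat he₂ hx1, eval_goursat ho₁ hx1,
    eval_goursat ho₂ hx1] at hinv ⊢
  generalize (1 - x) / (1 + x) = s at hinv hs ⊢
  clear_value c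
  linear_combination (-q.eval x) * hc - c ^ 2 * hinv
    + c ^ 2 * (1 + x) ^ (2 * m) * (o₁.eval s ^ 2 + o₂.eval s ^ 2) * hs

theorem exists_eq_sq_add_sq_add_C_sq_sub_X_sq_mul_of_nonneg_on_Icc (q : ℝ[X]) {k : ℕ}
    (hk : 1 ≤ k) {ε : ℝ} (hε : 0 < ε) (hdeg : q.natDegree ≤ 2 * k)
    (hq : ∀ x ∈ Set.Icc (-ε) ε, 0 ≤ q.eval x) :
    ∃ f₁ f₂ g₁ g₂ : ℝ[X], f₁.natDegree ≤ k ∧ f₂.natDegree ≤ k ∧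
      g₁.natDegree ≤ k - 1 ∧ g₂.natDegree ≤ k - 1 ∧
      q = f₁ ^ 2 + f₂ ^ 2 + (C (ε ^ 2) - X ^ 2) * (g₁ ^ 2 + g₂ ^ 2) := by
  obtain ⟨f₁, f₂, g₁, g₂, hf₁, hf₂, hg₁, hg₂, hrep⟩ :=
    exists_eq_sq_add_sq_add_one_sub_X_sq_mul_of_nonneg_on_Icc (q.comp (C ε * X)) hk
      (by rwa [natDegree_comp, natDegree_C_mul_X _ hε.ne', mul_one])
      fun x ⟨h₁, h₂⟩ => by simpa using hq (ε * x) ⟨by nlinarith, by nlinarith⟩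
  set w : ℝ[X] := C ε⁻¹ * X
  have hw : (C ε * X).comp w = X := by simp [w, ← mul_assoc, ← C_mul, hε.ne']
  have hdeg_w (f : ℝ[X]) : (f.comp w).natDegree = f.natDegree := by
    rw [natDegree_comp, natDegree_C_mul_X _ (inv_ne_zero hε.ne'), mul_one]
  have hε2 : C ε⁻¹ ^ 2 * C (ε ^ 2) = (1 : ℝ[X]) := by
    rw [← C_pow, ← C_mul, ← mul_pow, inv_mul_cancel₀ hε.ne', one_pow, C_1]
  refine ⟨f₁.comp w, f₂.comp w, C ε⁻¹ * g₁.comp w, C ε⁻¹ * g₂.comp w,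
    by rwa [hdeg_w], by rwa [hdeg_w], (natDegree_C_mul_le _ _).trans (by rwa [hdeg_w]),
    (natDegree_C_mul_le _ _).trans (by rwa [hdeg_w]), ?_⟩
  have := congrArg (·.comp w) hrep
  simp only [comp_assoc, hw, comp_X, add_comp, mul_comp, pow_comp, sub_comp, one_comp,
    X_comp] at this
  rw [this]
  linear_combination (-(g₁.comp w ^ 2 + g₂.comp w ^ 2)) * hε2

end Polynomial

noncomputable def rieszFunctional (m : ℕ → ℝ) : ℝ[X] →ₗ[ℝ] ℝ :=
  lsum fun j => m j • LinearMap.id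

theorem rieszFunctional_monomial (m : ℕ → ℝ) (j : ℕ) (a : ℝ) :
    rieszFunctional m (monomial j a) = a * m j := by
  simp [rieszFunctional, mul_comm]

theorem rieszFunctional_X_pow_mul_mul (m : ℕ → ℝ) (a : ℕ) {K : ℕ} {f g : ℝ[X]}
    (hf : f.natDegree ≤ K) (hg : g.natDegree ≤ K) :
    rieszFunctional m (X ^ a * f * g) =
      (fun i : Fin (K + 1) => f.coeff i) ⬝ᵥ (hankel m a K *ᵥ fun j => g.coeff j) := by
  conv_lhs => rw [f.as_sum_range' (K + 1) (by omega), g.as_sum_range' (K + 1) (by omega),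
    ← Fin.sum_univ_eq_sum_range (fun i => monomial i (f.coeff i)),
    ← Fin.sum_univ_eq_sum_range (fun i => monomial i (g.coeff i))]
  simp only [mul_sum, sum_mul, map_sum, X_pow_eq_monomial, monomial_mul_monomial,
    rieszFunctional_monomial, dotProduct, Matrix.mulVec, hankel, Matrix.of_apply]
  rw [sum_comm]
  exact sum_congr rfl fun i _ => sum_congr rfl fun j _ => by ring

theorem rieszFunctional_C (m : ℕ → ℝ) (a : ℝ) : rieszFunctional m (C a) = a * m 0 := by
  rw [← monomial_zero_left, rieszFunctional_monomial]

theorem rieszFunctional_sq_nonneg {m : ℕ → ℝ} {K : ℕ} (hm : (hankel m 0 K).PosSemidef)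
    {f : ℝ[X]} (hf : f.natDegree ≤ K) : 0 ≤ rieszFunctional m (f ^ 2) := by
  have := hm.dotProduct_mulVec_nonneg fun i => f.coeff i
  rwa [star_trivial, ← rieszFunctional_X_pow_mul_mul m 0 hf hf, pow_zero, one_mul, ← sq] at this

theorem rieszFunctional_localizing_nonneg {m : ℕ → ℝ} {K : ℕ} {c : ℝ}
    (hm : (c • hankel m 0 K - hankel m 2 K).PosSemidef) {g : ℝ[X]} (hg : g.natDegree ≤ K) :
    0 ≤ rieszFunctional m ((C c - X ^ 2) * g ^ 2) := by
  have := hm.dotProduct_mulVec_nonneg fun i => g.coeff i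
  rw [star_trivial, sub_mulVec, smul_mulVec, dotProduct_sub, dotProduct_smul,
    ← rieszFunctional_X_pow_mul_mul m 0 hg hg, ← rieszFunctional_X_pow_mul_mul m 2 hg hg,
    ← map_smul, ← map_sub] at this
  rwa [show (C c - X ^ 2) * g ^ 2 = c • (X ^ 0 * g * g) - X ^ 2 * g * g by
    rw [smul_eq_C_mul]; ring]

theorem hankel_pow_eq_smul_vecMulVec (y : ℝ) (a K : ℕ) :
    hankel (fun j => y ^ j) a K = y ^ a •
      vecMulVec (fun i : Fin (K + 1) => y ^ (i : ℕ)) fun i : Fin (K + 1) => y ^ (i : ℕ) := by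
  ext i j
  simp [hankel, vecMulVec_apply, pow_add, mul_assoc]

theorem posSemidef_hankel_pow (y : ℝ) (K : ℕ) : (hankel (fun j => y ^ j) 0 K).PosSemidef := by
  rw [hankel_pow_eq_smul_vecMulVec, pow_zero, one_smul]
  exact posSemidef_vecMulVec_self_star _

theorem posSemidef_localizing_hankel_pow {y c : ℝ} (hy : y ^ 2 ≤ c) (K : ℕ) :
    (c • hankel (fun j => y ^ j) 0 K - hankel (fun j => y ^ j) 2 K).PosSemidef := by
  rw [hankel_pow_eq_smul_vecMulVec, hankel_pow_eq_smul_vecMulVec, pow_zero, one_smul,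
    ← sub_smul]
  exact (posSemidef_vecMulVec_self_star _).smul (sub_nonneg.mpr hy)

theorem rieszFunctional_le_of_le_on_Icc {k : ℕ} (hk : 1 ≤ k) {ε : ℝ} (hε : 0 < ε)
    {m : ℕ → ℝ} (hm₀ : m 0 = 1) (hm₁ : (hankel m 0 k).PosSemidef)
    (hm₂ : (ε ^ 2 • hankel m 0 (k - 1) - hankel m 2 (k - 1)).PosSemidef) {P : ℝ[X]}
    (hdeg : P.natDegree ≤ 2 * k) {S : ℝ} (hP : ∀ x ∈ Set.Icc (-ε) ε, P.eval x ≤ S) :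
    rieszFunctional m P ≤ S := by
  obtain ⟨f₁, f₂, g₁, g₂, hf₁, hf₂, hg₁, hg₂, hrep⟩ :=
    exists_eq_sq_add_sq_add_C_sq_sub_X_sq_mul_of_nonneg_on_Icc (C S - P) hk hε
      ((natDegree_sub_le _ _).trans (by simpa using hdeg)) fun x hx => by simpa using hP x hx
  have hnonneg : 0 ≤ rieszFunctional m (C S - P) := by
    rw [hrep, mul_add, map_add, map_add, map_add]
    have := rieszFunctional_sq_nonneg hm₁ hf₁
    have := rieszFunctional_sq_nonneg hm₁ hf₂
    have := rieszFunctional_localizing_nonneg hm₂ hg₁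
    have := rieszFunctional_localizing_nonneg hm₂ hg₂
    linarith
  rwa [map_sub, rieszFunctional_C, hm₀, mul_one, sub_nonneg] at hnonneg

/-- Exactness of the semidefinite moment relaxation for univariate polynomial
optimization on a symmetric interval. -/
theorem sdp_moment_relaxation_exact (k : ℕ) (hk : 1 ≤ k) (ε : ℝ) (hε : 0 < ε)
    (p : ℕ → ℝ) :
    sSup {v : ℝ | ∃ y ∈ Set.Icc (-ε) ε,
        v = ∑ j ∈ Finset.range (2 * k + 1), p j * y ^ j} =
      sSup {v : ℝ | ∃ m : ℕ → ℝ, m 0 = 1 ∧ (hankel m 0 k).PosSemidef ∧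
        (ε ^ 2 • hankel m 0 (k - 1) - hankel m 2 (k - 1)).PosSemidef ∧
        v = ∑ j ∈ Finset.range (2 * k + 1), p j * m j} := by
  set P : ℝ[X] := ∑ j ∈ range (2 * k + 1), C (p j) * X ^ j
  have hPeval : ∀ y, P.eval y = ∑ j ∈ range (2 * k + 1), p j * y ^ j := fun y => by
    simp [P, eval_finsetSum]
  have hPriesz : ∀ m, rieszFunctional m P = ∑ j ∈ range (2 * k + 1), p j * m j := fun m => by
    simp only [P, map_sum, C_mul_X_pow_eq_monomial, rieszFunctional_monomial]
  have hPdeg : P.natDegree ≤ 2 * k := natDegree_sum_le_of_forall_le _ _ fun j hj =>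
    (natDegree_C_mul_X_pow_le _ _).trans (Nat.lt_succ_iff.mp (mem_range.mp hj))
  obtain ⟨y₀, hy₀, hmax⟩ := (isCompact_Icc (a := -ε) (b := ε)).exists_isMaxOn
    (Set.nonempty_Icc.mpr (by linarith)) P.continuous.continuousOn
  rw [IsGreatest.csSup_eq (a := P.eval y₀), IsGreatest.csSup_eq (a := P.eval y₀)]
  · refine ⟨⟨fun j => y₀ ^ j, pow_zero y₀, posSemidef_hankel_pow y₀ k,
      posSemidef_localizing_hankel_pow (sq_le_sq' hy₀.1 hy₀.2) (k - 1), hPeval y₀⟩, ?_⟩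
    rintro _ ⟨m, hm₀, hm₁, hm₂, rfl⟩
    rw [← hPriesz]
    exact rieszFunctional_le_of_le_on_Icc hk hε hm₀ hm₁ hm₂ hPdeg fun x hx => hmax hx
  · refine ⟨⟨y₀, hy₀, hPeval y₀⟩, ?_⟩
    rintro _ ⟨y, hy, rfl⟩
    rw [← hPeval]
    exact hmax hy
end
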